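/- arXiv:2504.20807 — 3 statements merged into one kernel-verified Lean document; each statement's English description precedes it below -/
import Mathlib

section
/- Assume in addition X ⊆ Y. Then: (i) for every y ∈ X, the function x ↦ c(x,y) − g ln x₃ on X attains its minimum uniquely at x = y, with minimum value g − g ln y₃; (ii) for every Borel probability measure σ on X, the optimal transport cost from σ to itself satisfies T_c(σ,σ) = g, and the identity coupling (the pushforward of σ under x ↦ (x,x)) is optimal. -/
open MeasureTheory Set Real Filter
open scoped ENNReal NNReal

noncomputable section

abbrev R3 : Type := EuclideanSpace ℝ (Fin 3)

def Ydom (δ : ℝ) : Set R3 := {y : R3 | y 2 ∈ Set.Ioo δ δ⁻¹}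

def Phi (fcor g : ℝ) (x : R3) : R3 :=
  WithLp.toLp 2 ![(fcor ^ 2)⁻¹ * x 0, (fcor ^ 2)⁻¹ * x 1,
    g⁻¹ * (x 2 - (1 / 2) * (fcor ^ 2)⁻¹ * ((x 0) ^ 2 + (x 1) ^ 2))]

def cost (fcor g : ℝ) (x y : R3) : ℝ :=
  (y 2)⁻¹ * (fcor ^ 2 / 2 * (x 0 - y 0) ^ 2 + fcor ^ 2 / 2 * (x 1 - y 1) ^ 2 + g * x 2)

def Tcost (fcor g : ℝ) (σ α : Measure R3) : ℝ :=
  sInf {r : ℝ | ∃ pl : Measure (R3 × R3), IsProbabilityMeasure pl ∧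
    pl.map Prod.fst = σ ∧ pl.map Prod.snd = α ∧ r = ∫ p, cost fcor g p.1 p.2 ∂pl}

open Classical in
def Fen (κ γ : ℝ) (X : Set R3) (σ : Measure R3) : EReal :=
  if σ ≪ (volume : Measure R3) then
    ((ENNReal.ofReal κ * (∫⁻ x in X, σ.rnDeriv volume x ^ γ) : ℝ≥0∞) : EReal)
  else ⊤

def Egeo (fcor g κ γ : ℝ) (X : Set R3) (σ α : Measure R3) : EReal :=
  ((Tcost fcor g σ α : ℝ) : EReal) + Fen κ γ X σ

def fstar (κ γ : ℝ) (t : ℝ) : ℝ :=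
  sSup ((fun s => s * t - κ * s ^ γ) '' Set.Ici (0:ℝ))

def wc (fcor g : ℝ) (N : ℕ) (w : Fin N → ℝ) (z : Fin N → R3) (x : R3) : ℝ :=
  ⨅ i, (cost fcor g x (z i) - w i)

def Gdual (fcor g κ γ : ℝ) (X : Set R3) (N : ℕ) (m : Fin N → ℝ)
    (w : Fin N → ℝ) (z : Fin N → R3) : ℝ :=
  ∑ i, m i * w i - ∫ x in X, fstar κ γ (-(wc fcor g N w z x))

def LagCell (fcor g : ℝ) (X : Set R3) (N : ℕ) (w : Fin N → ℝ) (z : Fin N → R3) (i : Fin N) :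
    Set R3 :=
  {x ∈ X | ∀ j, cost fcor g x (z i) - w i ≤ cost fcor g x (z j) - w j}

def simplexN (N : ℕ) : Set (Fin N → ℝ) := {m | (∀ i, m i ∈ Set.Ioo (0:ℝ) 1) ∧ ∑ i, m i = 1}

def DN (δ : ℝ) (N : ℕ) : Set (Fin N → R3) :=
  {z | (∀ i, z i ∈ Ydom δ) ∧ ∀ i j, i ≠ j → z i ≠ z j}

def D0N (δ : ℝ) (N : ℕ) : Set (Fin N → R3) :=
  {z | z ∈ DN δ N ∧ ∀ i j, i ≠ j → z i 2 ≠ z j 2}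

def Jmap (fcor : ℝ) (v : R3) : R3 := WithLp.toLp 2 ![-(fcor * v 1), fcor * v 0, 0]

def diracComb (N : ℕ) (m : Fin N → ℝ) (z : Fin N → R3) : Measure R3 :=
  ∑ i, ENNReal.ofReal (m i) • Measure.dirac (z i)

def Cmap (fcor g κ γ : ℝ) (X : Set R3) (N : ℕ) (m : Fin N → ℝ)
    (wstar : (Fin N → R3) → Fin N → ℝ) (z : Fin N → R3) (i : Fin N) : R3 :=
  (m i)⁻¹ • ∫ x in LagCell fcor g X N (wstar z) z i,
    deriv (fstar κ γ) (wstar z i - cost fcor g x (z i)) • x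

/-!
Dropping the horizontal terms and using `log t ≤ t - 1` gives
`c(x, y) ≥ g x₃ / y₃ ≥ g + g log x₃ - g log y₃`, with equality only on the diagonal;
this is (i).
For a coupling `ρ` of `σ` with itself the terms `g log x₃` and `g log y₃` have the same
integral, so `∫ c dρ ≥ g`, and the identity coupling attains `g` because `c(x, x) = g`.
-/

section Cost

variable {fcor g : ℝ} {x y : R3}

lemma cost_self (hy : y 2 ≠ 0) : cost fcor g y y = g := by
  unfold cost
  field_simp
  ring

lemma cost_eq_add_mul_div (hy : y 2 ≠ 0) :
    cost fcor g x y =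
      (y 2)⁻¹ * (fcor ^ 2 / 2 * ((x 0 - y 0) ^ 2 + (x 1 - y 1) ^ 2)) + g * (x 2 / y 2) := by
  unfold cost
  field_simp

lemma mul_div_le_cost (hy : 0 < y 2) : g * (x 2 / y 2) ≤ cost fcor g x y := by
  have : 0 ≤ (y 2)⁻¹ * (fcor ^ 2 / 2 * ((x 0 - y 0) ^ 2 + (x 1 - y 1) ^ 2)) := by positivity
  linarith [cost_eq_add_mul_div (fcor := fcor) (g := g) (x := x) hy.ne']

lemma add_mul_log_sub_le_cost (hg : 0 ≤ g) (hx : 0 < x 2) (hy : 0 < y 2) :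
    g + g * log (x 2) - g * log (y 2) ≤ cost fcor g x y := by
  have hlog : log (x 2) - log (y 2) ≤ x 2 / y 2 - 1 := by
    rw [← log_div hx.ne' hy.ne']
    exact log_le_sub_one_of_pos (div_pos hx hy)
  linarith [mul_le_mul_of_nonneg_left hlog hg, mul_div_le_cost (fcor := fcor) (g := g) (x := x) hy]

lemma add_mul_log_sub_lt_cost (hf : fcor ≠ 0) (hg : 0 < g) (hx : 0 < x 2) (hy : 0 < y 2)
    (hxy : x ≠ y) : g + g * log (x 2) - g * log (y 2) < cost fcor g x y := by
  by_cases h2 : x 2 = y 2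
  · have hsq : 0 < (x 0 - y 0) ^ 2 + (x 1 - y 1) ^ 2 := by
      have : x 0 ≠ y 0 ∨ x 1 ≠ y 1 := by
        contrapose! hxy
        ext i
        fin_cases i <;> simp [hxy.1, hxy.2, h2]
      rcases this with h | h <;> have := sub_ne_zero.mpr h <;> positivity
    have : 0 < (y 2)⁻¹ * (fcor ^ 2 / 2 * ((x 0 - y 0) ^ 2 + (x 1 - y 1) ^ 2)) := by positivity
    rw [cost_eq_add_mul_div hy.ne', h2, div_self hy.ne']
    linarith
  · have hlog : log (x 2) - log (y 2) < x 2 / y 2 - 1 := by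
      rw [← log_div hx.ne' hy.ne']
      exact log_lt_sub_one_of_pos (div_pos hx hy) (fun h => h2 ((div_eq_one_iff_eq hy.ne').mp h))
    linarith [mul_lt_mul_of_pos_left hlog hg, mul_div_le_cost (fcor := fcor) (g := g) (x := x) hy]

lemma measurable_cost : Measurable fun p : R3 × R3 => cost fcor g p.1 p.2 := by
  unfold cost
  fun_prop

lemma continuousOn_cost :
    ContinuousOn (fun p : R3 × R3 => cost fcor g p.1 p.2) {p | p.2 2 ≠ 0} := by
  have hheight : Continuous fun p : R3 × R3 => p.2 2 := by fun_prop
  unfold cost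
  exact (hheight.continuousOn.inv₀ fun _ hp => hp).mul (by fun_prop)

end Cost

section Coupling

variable {α : Type*} [MeasurableSpace α] {σ : Measure α} {ρ : Measure (α × α)}
  {h : α → ℝ}

lemma map_diag_fst (σ : Measure α) : (σ.map fun x => (x, x)).map Prod.fst = σ :=
  (Measure.fst_map_prodMk measurable_id).trans Measure.map_id

lemma map_diag_snd (σ : Measure α) : (σ.map fun x => (x, x)).map Prod.snd = σ :=
  (Measure.snd_map_prodMk measurable_id).trans Measure.map_id

lemma integrable_comp_fst_sub_comp_snd (hfst : ρ.map Prod.fst = σ) (hsnd : ρ.map Prod.snd = σ)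
    (hh : Integrable h σ) : Integrable (fun p : α × α => h p.1 - h p.2) ρ :=
  ((hfst ▸ hh).comp_measurable measurable_fst).sub ((hsnd ▸ hh).comp_measurable measurable_snd)

lemma integral_comp_fst_sub_comp_snd (hfst : ρ.map Prod.fst = σ) (hsnd : ρ.map Prod.snd = σ)
    (hh : Integrable h σ) : ∫ p, (h p.1 - h p.2) ∂ρ = 0 := by
  rw [integral_sub ((hfst ▸ hh).comp_measurable measurable_fst)
      ((hsnd ▸ hh).comp_measurable measurable_snd),
    ← integral_map measurable_fst.aemeasurable (hfst ▸ hh.aestronglyMeasurable),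
    ← integral_map measurable_snd.aemeasurable (hsnd ▸ hh.aestronglyMeasurable), hfst, hsnd,
    sub_self]

end Coupling

lemma integrable_of_continuousOn_of_ae_mem {β E : Type*} [TopologicalSpace β]
    [MeasurableSpace β] [OpensMeasurableSpace β] [T2Space β] [NormedAddCommGroup E]
    {μ : Measure β} [IsFiniteMeasure μ] {K : Set β} {f : β → E} (hK : IsCompact K)
    (hf : ContinuousOn f K) (hμ : ∀ᵐ x ∂μ, x ∈ K) : Integrable f μ := by
  simpa [IntegrableOn, Measure.restrict_eq_self_of_ae_mem hμ] using
    hf.integrableOn_compact (μ := μ) hK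

section Transport

variable {fcor g : ℝ} {X : Set R3} {σ : Measure R3}

lemma le_integral_cost_of_coupling (hg : 0 ≤ g) (hX : IsCompact X) (hpos : ∀ x ∈ X, 0 < x 2)
    (hσX : ∀ᵐ x ∂σ, x ∈ X) {ρ : Measure (R3 × R3)} [IsProbabilityMeasure ρ]
    (hfst : ρ.map Prod.fst = σ) (hsnd : ρ.map Prod.snd = σ) :
    g ≤ ∫ p, cost fcor g p.1 p.2 ∂ρ := by
  have : IsFiniteMeasure σ := hfst ▸ inferInstance
  have hρX : ∀ᵐ p ∂ρ, p ∈ X ×ˢ X := by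
    filter_upwards [ae_of_ae_map measurable_fst.aemeasurable (hfst ▸ hσX),
      ae_of_ae_map measurable_snd.aemeasurable (hsnd ▸ hσX)] with p h1 h2 using ⟨h1, h2⟩
  have hlog : Integrable (fun x : R3 => g * log (x 2)) σ :=
    integrable_of_continuousOn_of_ae_mem hX
      (by fun_prop (disch := exact fun x hx => (hpos x hx).ne')) hσX
  have hcost : Integrable (fun p : R3 × R3 => cost fcor g p.1 p.2) ρ :=
    integrable_of_continuousOn_of_ae_mem (hX.prod hX)
      (continuousOn_cost.mono fun p hp => (hpos _ hp.2).ne') hρX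
  calc g = ∫ p, (g + (g * log (p.1 2) - g * log (p.2 2))) ∂ρ := by
        rw [integral_add (integrable_const g) (integrable_comp_fst_sub_comp_snd hfst hsnd hlog),
          integral_comp_fst_sub_comp_snd hfst hsnd hlog]
        simp
    _ ≤ ∫ p, cost fcor g p.1 p.2 ∂ρ := by
        refine integral_mono_ae ((integrable_const g).add
          (integrable_comp_fst_sub_comp_snd hfst hsnd hlog)) hcost ?_
        filter_upwards [hρX] with p hp
        linarith [add_mul_log_sub_le_cost (fcor := fcor) hg (hpos _ hp.1) (hpos _ hp.2)]

lemma integral_cost_map_diag [IsProbabilityMeasure σ] (hσ : ∀ᵐ x ∂σ, x 2 ≠ 0) :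
    ∫ p, cost fcor g p.1 p.2 ∂(σ.map fun x => (x, x)) = g := by
  rw [integral_map (by fun_prop) measurable_cost.aestronglyMeasurable,
    integral_congr_ae (hσ.mono fun x hx => cost_self hx)]
  simp

lemma Tcost_self_eq [IsProbabilityMeasure σ] (hg : 0 ≤ g) (hX : IsCompact X)
    (hpos : ∀ x ∈ X, 0 < x 2) (hσX : ∀ᵐ x ∂σ, x ∈ X) : Tcost fcor g σ σ = g := by
  refine IsLeast.csInf_eq ⟨⟨_, Measure.isProbabilityMeasure_map (by fun_prop), map_diag_fst σ,
    map_diag_snd σ, (integral_cost_map_diag (hσX.mono fun x hx => (hpos x hx).ne')).symm⟩, ?_⟩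
  rintro _ ⟨ρ, hρ, hfst, hsnd, rfl⟩
  exact le_integral_cost_of_coupling hg hX hpos hσX hfst hsnd

end Transport

theorem stmt16_general (fcor g δ : ℝ) (hf : 0 < fcor) (hg : 0 < g) (hδ : δ ∈ Set.Ioo (0:ℝ) 1)
    (X : Set R3) (hXcpt : IsCompact X) (hXY : X ⊆ Ydom δ) :
    (∀ y ∈ X,
      (cost fcor g y y - g * Real.log (y 2) = g - g * Real.log (y 2)) ∧
      (∀ x ∈ X, g - g * Real.log (y 2) ≤ cost fcor g x y - g * Real.log (x 2)) ∧
      (∀ x ∈ X, x ≠ y → g - g * Real.log (y 2) < cost fcor g x y - g * Real.log (x 2))) ∧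
    (∀ σ : Measure R3, IsProbabilityMeasure σ → σ Xᶜ = 0 →
      Tcost fcor g σ σ = g ∧
      (Measure.map (fun x : R3 => (x, x)) σ).map Prod.fst = σ ∧
      (Measure.map (fun x : R3 => (x, x)) σ).map Prod.snd = σ ∧
      (∫ p, cost fcor g p.1 p.2 ∂(Measure.map (fun x : R3 => (x, x)) σ))
        = Tcost fcor g σ σ) := by
  have hpos : ∀ x ∈ X, 0 < x 2 := fun x hx => hδ.1.trans (hXY hx).1
  refine ⟨fun y hy => ⟨by rw [cost_self (hpos y hy).ne'], fun x hx => ?_, fun x hx hxy => ?_⟩,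
    fun σ hσ hσX => ?_⟩
  · linarith [add_mul_log_sub_le_cost (fcor := fcor) hg.le (hpos x hx) (hpos y hy)]
  · linarith [add_mul_log_sub_lt_cost hf.ne' hg (hpos x hx) (hpos y hy) hxy]
  · have hσX' : ∀ᵐ x ∂σ, x ∈ X := ae_iff.2 hσX
    have hT := Tcost_self_eq (fcor := fcor) hg.le hXcpt hpos hσX'
    exact ⟨hT, map_diag_fst σ, map_diag_snd σ,
      (integral_cost_map_diag (hσX'.mono fun x hx => (hpos x hx).ne')).trans hT.symm⟩

theorem stmt16 (fcor g δ : ℝ) (hf : 0 < fcor) (hg : 0 < g) (hδ : δ ∈ Set.Ioo (0:ℝ) 1)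
    (X : Set R3) (hXne : X.Nonempty) (hXconn : IsConnected X) (hXcpt : IsCompact X)
    (hXcl : X = closure (interior X)) (hXconv : Convex ℝ (Phi fcor g ⁻¹' X))
    (hXY : X ⊆ Ydom δ) :
    (∀ y ∈ X,
      (cost fcor g y y - g * Real.log (y 2) = g - g * Real.log (y 2)) ∧
      (∀ x ∈ X, g - g * Real.log (y 2) ≤ cost fcor g x y - g * Real.log (x 2)) ∧
      (∀ x ∈ X, x ≠ y → g - g * Real.log (y 2) < cost fcor g x y - g * Real.log (x 2))) ∧
    (∀ σ : Measure R3, IsProbabilityMeasure σ → σ Xᶜ = 0 →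
      Tcost fcor g σ σ = g ∧
      (Measure.map (fun x : R3 => (x, x)) σ).map Prod.fst = σ ∧
      (Measure.map (fun x : R3 => (x, x)) σ).map Prod.snd = σ ∧
      (∫ p, cost fcor g p.1 p.2 ∂(Measure.map (fun x : R3 => (x, x)) σ))
        = Tcost fcor g σ σ) :=
  stmt16_general fcor g δ hf hg hδ X hXcpt hXY
end
end

section
/- Take γ = 2 and κ = 1/2, so that f*(t) = t²/2 for t > 0 and f*(t) = 0 for t ≤ 0. Let X = [−a,a] × [−b,b] × [0,h] with a,b,h > 0 and |X| = 4abh, let N = 1 with single mass m¹ = 1, and let z ∈ Y satisfy c(x,z) − (1/|X|)∫_X c(x̃,z) dx̃ < 1/|X| for all x ∈ X. Set w = (1/|X|)(1 + ∫_X c(x,z) dx). Then: (i) w is the unique maximiser over ℝ of the dual functional w̃ ↦ G(w̃,z) = w̃ − ∫_X f*(w̃ − c(x,z)) dx; (ii) the unique minimiser of E(·,δ_z) over Borel probability measures on X is the absolutely continuous measure with density x ↦ w − c(x,z); (iii) the first two components of the centroid C(z) = ∫_X x (w − c(x,z)) dx satisfy C₁(z) = (1 − B) z₁ and C₂(z)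 = (1 − A) z₂, where A = 1 − |X| f_cor² b² / (3 z₃) and B = 1 − |X| f_cor² a² / (3 z₃). -/
open MeasureTheory Set Real Filter
open scoped ENNReal NNReal

noncomputable section

/-! With a single seed the dual functional depends on one real number. Since `f*` is strictly
convex on `(0, ∞)` with derivative the identity there, the tangent-line inequality for `f*` at
`ρ₀ = w - c(·, z) > 0`, integrated over `X` against `∫ ρ₀ = 1`, shows that every `w' ≠ w` gives a
strictly smaller value of the dual functional.

For a probability measure `σ` on `X` with square-integrable density `ρ`, the energy is
`E(σ, δ_z) = ∫ c ρ + ½ ∫ ρ²` (every coupling with `δ_z` is the product one), and as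
`c = w - ρ₀` on `X` and `∫ ρ = ∫ ρ₀`, we get `E(σ) - E(ρ₀) = ½ ∫ (ρ - ρ₀)²`. All other `σ` have
infinite energy. The centroid is computed by Fubini on the box: after expanding `c`, every term
of `(w - c) x₁` except the one in `x₁²` is odd in `x₁` (and likewise for `x₂`). -/

lemma fstar_half_two (t : ℝ) : fstar (1 / 2) 2 t = max t 0 ^ 2 / 2 := by
  refine IsGreatest.csSup_eq ⟨⟨max t 0, le_max_right t 0, ?_⟩, ?_⟩
  · rcases le_total t 0 with ht | ht
    · simp [ht]
    · simp [ht]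
      ring
  · rintro y ⟨s, hs, rfl⟩
    simp only [Real.rpow_two]
    nlinarith [sq_nonneg (s - max t 0), mul_nonneg (mem_Ici.mp hs) (sub_nonneg.2 (le_max_left t 0)),
      le_max_right t 0]

lemma sq_div_two_add_mul_sub_lt {u v : ℝ} (hu : 0 < u) (hne : v ≠ u) :
    u ^ 2 / 2 + u * (v - u) < max v 0 ^ 2 / 2 := by
  rcases le_or_gt 0 v with hv | hv
  · rw [max_eq_left hv]
    nlinarith [sq_pos_of_ne_zero (sub_ne_zero.mpr hne)]
  · rw [max_eq_right hv.le]
    nlinarith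

lemma integral_pos_of_ae_pos {α : Type*} [MeasurableSpace α] {ν : Measure α} (hν : ν ≠ 0)
    {f : α → ℝ} (hf : Integrable f ν) (hpos : ∀ᵐ x ∂ν, 0 < f x) : 0 < ∫ x, f x ∂ν := by
  rw [integral_pos_iff_support_of_nonneg_ae (hpos.mono fun x hx => hx.le) hf, pos_iff_ne_zero]
  intro h0
  have hout : ∀ᵐ x ∂ν, x ∉ Function.support f := measure_eq_zero_iff_ae_notMem.mp h0
  refine hν (ae_eq_bot.mp (eventually_false_iff_eq_bot.mp ?_))
  filter_upwards [hout, hpos] with x h1 h2 using h1 h2.ne'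

section Dual

variable {α : Type*} [MeasurableSpace α] {ν : Measure α} [IsFiniteMeasure ν] {c : α → ℝ}

lemma integrable_max_sub_zero_sq (hc : MemLp c 2 ν) (v : ℝ) :
    Integrable (fun x => max (v - c x) 0 ^ 2) ν := by
  have hsub : MemLp (fun x => v - c x) 2 ν := (memLp_const v).sub hc
  have hc_meas := hc.aestronglyMeasurable
  refine hsub.integrable_sq.mono (by fun_prop) (Eventually.of_forall fun x => ?_)
  simp only [Real.norm_eq_abs, abs_pow, sq_abs]
  rcases le_total (v - c x) 0 with h | h
  · simp [h, sq_nonneg]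
  · simp [h]

lemma sub_integral_fstar_lt (hc : MemLp c 2 ν) (hν : ν ≠ 0) {w : ℝ}
    (hpos : ∀ᵐ x ∂ν, 0 < w - c x) (hmass : ∫ x, (w - c x) ∂ν = 1) {v : ℝ} (hne : v ≠ w) :
    v - ∫ x, fstar (1 / 2) 2 (v - c x) ∂ν < w - ∫ x, fstar (1 / 2) 2 (w - c x) ∂ν := by
  simp only [fstar_half_two]
  have hv : Integrable (fun x => max (v - c x) 0 ^ 2 / 2) ν :=
    (integrable_max_sub_zero_sq hc v).div_const 2
  have hw : Integrable (fun x => max (w - c x) 0 ^ 2 / 2) ν :=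
    (integrable_max_sub_zero_sq hc w).div_const 2
  have hρ : Integrable (fun x => (w - c x) * (v - w)) ν :=
    (((memLp_const w).sub hc).integrable one_le_two).mul_const _
  have hgap :
      0 < ∫ x, (max (v - c x) 0 ^ 2 / 2 - max (w - c x) 0 ^ 2 / 2 - (w - c x) * (v - w)) ∂ν := by
    refine integral_pos_of_ae_pos hν ((hv.sub hw).sub hρ) ?_
    filter_upwards [hpos] with x hx
    have := sq_div_two_add_mul_sub_lt hx (v := v - c x) (by contrapose! hne; linarith)
    rw [max_eq_left hx.le]
    linarith
  have hvw : Integrable (fun x => max (v - c x) 0 ^ 2 / 2 - max (w - c x) 0 ^ 2 / 2) ν := hv.sub hw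
  rw [integral_sub hvw hρ, integral_sub hv hw, integral_mul_const, hmass] at hgap
  linarith

lemma sub_integral_fstar_isGreatest_unique (hc : MemLp c 2 ν) (hν : ν ≠ 0) {w : ℝ}
    (hpos : ∀ᵐ x ∂ν, 0 < w - c x) (hmass : ∫ x, (w - c x) ∂ν = 1) :
    (∀ v, v - ∫ x, fstar (1 / 2) 2 (v - c x) ∂ν ≤ w - ∫ x, fstar (1 / 2) 2 (w - c x) ∂ν) ∧
      ∀ v, (∀ u, u - ∫ x, fstar (1 / 2) 2 (u - c x) ∂ν ≤ v - ∫ x, fstar (1 / 2) 2 (v - c x) ∂ν) →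
        v = w := by
  refine ⟨fun v => ?_, fun v hv => by_contra fun hvw => ?_⟩
  · rcases eq_or_ne v w with rfl | hvw
    exacts [le_rfl, (sub_integral_fstar_lt hc hν hpos hmass hvw).le]
  · exact (sub_integral_fstar_lt hc hν hpos hmass hvw).not_ge (hv w)

end Dual

section RadonNikodym

variable {α : Type*} [MeasurableSpace α] {ν σ : Measure α} [IsFiniteMeasure σ] {X : Set α}

lemma lintegral_rnDeriv_rpow_two :
    ∫⁻ x in X, σ.rnDeriv ν x ^ (2 : ℝ) ∂ν =
      ∫⁻ x in X, ENNReal.ofReal ((σ.rnDeriv ν x).toReal ^ 2) ∂ν := by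
  refine lintegral_congr_ae (ae_restrict_of_ae ?_)
  filter_upwards [σ.rnDeriv_lt_top ν] with x hx
  rw [ENNReal.rpow_two, ENNReal.ofReal_pow ENNReal.toReal_nonneg, ENNReal.ofReal_toReal hx.ne]

lemma lintegral_rnDeriv_rpow_two_ne_top_iff :
    ∫⁻ x in X, σ.rnDeriv ν x ^ (2 : ℝ) ∂ν ≠ ⊤ ↔
      Integrable (fun x => (σ.rnDeriv ν x).toReal ^ 2) (ν.restrict X) := by
  have hmeas : AEStronglyMeasurable (fun x => (σ.rnDeriv ν x).toReal ^ 2) (ν.restrict X) :=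
    ((σ.measurable_rnDeriv ν).ennreal_toReal.pow_const 2).aestronglyMeasurable
  rw [lintegral_rnDeriv_rpow_two, Integrable, hasFiniteIntegral_iff_ofReal
    (Eventually.of_forall fun x => sq_nonneg _), lt_top_iff_ne_top]
  exact ⟨fun h => ⟨hmeas, h⟩, fun h => h.2⟩

omit [IsFiniteMeasure σ] in
lemma memLp_two_toReal_rnDeriv {μ : Measure α}
    (h : Integrable (fun x => (σ.rnDeriv ν x).toReal ^ 2) μ) :
    MemLp (fun x => (σ.rnDeriv ν x).toReal) 2 μ :=
  (memLp_two_iff_integrable_sq (σ.measurable_rnDeriv ν).ennreal_toReal.aestronglyMeasurable).mpr h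

lemma Measure.eq_of_toReal_rnDeriv_ae_eq [SigmaFinite ν] {τ : Measure α} [IsFiniteMeasure τ]
    (hσ : σ ≪ ν) (hτ : τ ≪ ν) (hσX : σ Xᶜ = 0) (hτX : τ Xᶜ = 0)
    (h : ∀ᵐ x ∂ν.restrict X, (σ.rnDeriv ν x).toReal = (τ.rnDeriv ν x).toReal) : σ = τ := by
  have heq : σ.rnDeriv ν =ᵐ[ν.restrict X] τ.rnDeriv ν := by
    filter_upwards [h, ae_restrict_of_ae (σ.rnDeriv_lt_top ν),
      ae_restrict_of_ae (τ.rnDeriv_lt_top ν)] with x hx hσx hτx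
    exact (ENNReal.toReal_eq_toReal_iff' hσx.ne hτx.ne).mp hx
  ext s hs
  rw [← measure_inter_conull hσX, ← measure_inter_conull hτX,
    ← Measure.setLIntegral_rnDeriv hσ, ← Measure.setLIntegral_rnDeriv hτ]
  exact lintegral_congr_ae (ae_restrict_of_ae_restrict_of_subset inter_subset_right heq)

end RadonNikodym

def densityOn {α : Type*} [MeasurableSpace α] (ν : Measure α) (X : Set α) (ρ : α → ℝ) : Measure α :=
  (ν.restrict X).withDensity fun x => ENNReal.ofReal (ρ x)

section DensityOn

variable {α : Type*} [MeasurableSpace α] {ν : Measure α} {X : Set α} {ρ : α → ℝ}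

lemma isProbabilityMeasure_densityOn (hX : MeasurableSet X) (hρ : IntegrableOn ρ X ν)
    (hρ₀ : ∀ x ∈ X, 0 ≤ ρ x) (hmass : ∫ x in X, ρ x ∂ν = 1) :
    IsProbabilityMeasure (densityOn ν X ρ) := by
  constructor
  rw [densityOn, withDensity_apply _ MeasurableSet.univ, Measure.restrict_univ,
    ← ofReal_integral_eq_lintegral_ofReal hρ ((ae_restrict_iff' hX).mpr (.of_forall hρ₀)),
    hmass, ENNReal.ofReal_one]

lemma densityOn_absolutelyContinuous : densityOn ν X ρ ≪ ν :=
  (withDensity_absolutelyContinuous _ _).trans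
    (Measure.absolutelyContinuous_of_le Measure.restrict_le_self)

lemma densityOn_compl (hX : MeasurableSet X) : densityOn ν X ρ Xᶜ = 0 :=
  withDensity_absolutelyContinuous _ _ (by rw [Measure.restrict_apply hX.compl, compl_inter_self,
    measure_empty])

lemma toReal_rnDeriv_densityOn [SigmaFinite ν] (hX : MeasurableSet X) (hρ : Measurable ρ)
    (hρ₀ : ∀ x ∈ X, 0 ≤ ρ x) :
    ∀ᵐ x ∂ν.restrict X, ((densityOn ν X ρ).rnDeriv ν x).toReal = ρ x := by
  have hmeas : Measurable (X.indicator fun x => ENNReal.ofReal (ρ x)) :=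
    hρ.ennreal_ofReal.indicator hX
  rw [densityOn, ← withDensity_indicator hX]
  filter_upwards [ae_restrict_of_ae (Measure.rnDeriv_withDensity ν hmeas),
    ae_restrict_mem hX] with x hx hxX
  rw [hx, indicator_of_mem hxX, ENNReal.toReal_ofReal (hρ₀ x hxX)]

end DensityOn

lemma integral_mul_add_half_integral_sq_eq {α : Type*} [MeasurableSpace α] {ν : Measure α}
    [IsFiniteMeasure ν] {c ρ ρ₀ : α → ℝ} {w : ℝ} (hρ : MemLp ρ 2 ν) (hρ₀ : MemLp ρ₀ 2 ν)
    (hc : ∀ᵐ x ∂ν, c x = w - ρ₀ x) (hmass : ∫ x, ρ x ∂ν = ∫ x, ρ₀ x ∂ν) :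
    ∫ x, c x * ρ x ∂ν + 1 / 2 * ∫ x, ρ x ^ 2 ∂ν =
      ∫ x, c x * ρ₀ x ∂ν + 1 / 2 * ∫ x, ρ₀ x ^ 2 ∂ν + 1 / 2 * ∫ x, (ρ x - ρ₀ x) ^ 2 ∂ν := by
  have i₁ := hρ.integrable one_le_two
  have i₀ := hρ₀.integrable one_le_two
  have i₁₁ := hρ.integrable_sq
  have i₀₀ := hρ₀.integrable_sq
  have i₀₁ : Integrable (fun x => ρ₀ x * ρ x) ν := hρ₀.integrable_mul hρ
  have e₁ : ∫ x, c x * ρ x ∂ν = w * ∫ x, ρ x ∂ν - ∫ x, ρ₀ x * ρ x ∂ν := by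
    rw [integral_congr_ae (hc.mono fun x hx => by rw [hx, sub_mul]),
      integral_sub (i₁.const_mul w) i₀₁, integral_const_mul]
  have e₀ : ∫ x, c x * ρ₀ x ∂ν = w * ∫ x, ρ₀ x ∂ν - ∫ x, ρ₀ x ^ 2 ∂ν := by
    rw [integral_congr_ae (hc.mono fun x hx => by rw [hx, sub_mul, ← sq]),
      integral_sub (i₀.const_mul w) i₀₀, integral_const_mul]
  have e₂ : ∫ x, (ρ x - ρ₀ x) ^ 2 ∂ν =
      ∫ x, ρ x ^ 2 ∂ν - 2 * ∫ x, ρ₀ x * ρ x ∂ν + ∫ x, ρ₀ x ^ 2 ∂ν := by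
    have i : Integrable (fun x => ρ x ^ 2 - 2 * (ρ₀ x * ρ x)) ν := i₁₁.sub (i₀₁.const_mul 2)
    rw [← integral_const_mul, ← integral_sub i₁₁ (i₀₁.const_mul 2), ← integral_add i i₀₀]
    congr 1; ext x; ring
  rw [e₁, e₀, e₂, hmass]
  ring

lemma measurable_cost_uncurry (fcor g : ℝ) : Measurable fun p : R3 × R3 => cost fcor g p.1 p.2 := by
  unfold cost; fun_prop

@[fun_prop]
lemma continuous_cost_left (fcor g : ℝ) (z : R3) : Continuous fun x => cost fcor g x z := by
  unfold cost; fun_prop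

lemma Tcost_dirac (fcor g : ℝ) (z : R3) (σ : Measure R3) [IsProbabilityMeasure σ] :
    Tcost fcor g σ (Measure.dirac z) = ∫ x, cost fcor g x z ∂σ := by
  suffices h : {r : ℝ | ∃ ξ : Measure (R3 × R3), IsProbabilityMeasure ξ ∧ ξ.map Prod.fst = σ ∧
      ξ.map Prod.snd = Measure.dirac z ∧ r = ∫ p, cost fcor g p.1 p.2 ∂ξ} =
      {∫ x, cost fcor g x z ∂σ} by
    rw [Tcost, h, csInf_singleton]
  ext r
  simp only [mem_ofPred_eq, mem_singleton_iff]
  constructor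
  · rintro ⟨ξ, -, hfst, hsnd, rfl⟩
    have hz : ∀ᵐ p ∂ξ, p.2 = z := by
      rw [ae_iff, show {p : R3 × R3 | ¬p.2 = z} = Prod.snd ⁻¹' {z}ᶜ from rfl,
        ← Measure.map_apply measurable_snd (measurableSet_singleton z).compl, hsnd,
        Measure.dirac_apply' _ (measurableSet_singleton z).compl]
      simp
    rw [integral_congr_ae (g := fun p => cost fcor g p.1 z) (hz.mono fun p hp => by rw [hp]),
      ← hfst,
      integral_map measurable_fst.aemeasurable (continuous_cost_left fcor g z).aestronglyMeasurable]
  · rintro rfl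
    have hm : Measurable fun x : R3 => (x, z) := measurable_prodMk_right
    refine ⟨σ.map fun x => (x, z), Measure.isProbabilityMeasure_map hm.aemeasurable, ?_, ?_, ?_⟩
    · rw [Measure.map_map measurable_fst hm]
      exact Measure.map_id
    · rw [Measure.map_map measurable_snd hm,
        show Prod.snd ∘ (fun x : R3 => (x, z)) = fun _ => z from rfl, Measure.map_const,
        measure_univ, one_smul]
    · exact (integral_map hm.aemeasurable
        (measurable_cost_uncurry fcor g).aestronglyMeasurable).symm
section GeostrophicEnergy

variable {fcor g κ : ℝ} {X : Set R3} {σ : Measure R3}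

lemma Fen_eq_top (hκ : 0 < κ) [IsFiniteMeasure σ]
    (hσ : ¬(σ ≪ volume ∧
      Integrable (fun x => (σ.rnDeriv volume x).toReal ^ 2) (volume.restrict X))) :
    Fen κ 2 X σ = ⊤ := by
  rw [← lintegral_rnDeriv_rpow_two_ne_top_iff, not_and_or, not_not] at hσ
  unfold Fen
  split_ifs with hac
  · rw [hσ.resolve_left (not_not.mpr hac), ENNReal.mul_top (by simpa using hκ)]
    rfl
  · rfl

lemma Fen_eq_of_integrable (hκ : 0 ≤ κ) [IsFiniteMeasure σ] (hac : σ ≪ volume)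
    (hσ : Integrable (fun x => (σ.rnDeriv volume x).toReal ^ 2) (volume.restrict X)) :
    Fen κ 2 X σ = ((κ * ∫ x in X, (σ.rnDeriv volume x).toReal ^ 2 : ℝ) : EReal) := by
  rw [Fen, if_pos hac, lintegral_rnDeriv_rpow_two,
    ← ofReal_integral_eq_lintegral_ofReal hσ (.of_forall fun x => sq_nonneg _),
    ← ENNReal.ofReal_mul hκ, EReal.coe_ennreal_ofReal,
    max_eq_left (mul_nonneg hκ (integral_nonneg fun x => sq_nonneg _))]

lemma Tcost_dirac_eq_setIntegral (z : R3) (hX : MeasurableSet X) [IsProbabilityMeasure σ]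
    (hac : σ ≪ volume) (hσX : σ Xᶜ = 0) :
    Tcost fcor g σ (Measure.dirac z) =
      ∫ x in X, cost fcor g x z * (σ.rnDeriv volume x).toReal := by
  calc Tcost fcor g σ (Measure.dirac z) = ∫ x in X, cost fcor g x z ∂σ := by
        rw [Tcost_dirac, Measure.restrict_eq_self_of_ae_mem (ae_iff.mpr hσX)]
    _ = ∫ x in X, cost fcor g x z * (σ.rnDeriv volume x).toReal := by
        rw [← setIntegral_toReal_rnDeriv_mul hac hX]
        simp_rw [mul_comm]

lemma Egeo_dirac_eq_top (hκ : 0 < κ) (z : R3) [IsFiniteMeasure σ]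
    (hσ : ¬(σ ≪ volume ∧
      Integrable (fun x => (σ.rnDeriv volume x).toReal ^ 2) (volume.restrict X))) :
    Egeo fcor g κ 2 X σ (Measure.dirac z) = ⊤ := by
  rw [Egeo, Fen_eq_top hκ hσ]
  exact EReal.add_top_of_ne_bot (EReal.coe_ne_bot _)

lemma Egeo_dirac_eq (hκ : 0 ≤ κ) (z : R3) (hX : MeasurableSet X) [IsProbabilityMeasure σ]
    (hac : σ ≪ volume) (hσX : σ Xᶜ = 0)
    (hσ : Integrable (fun x => (σ.rnDeriv volume x).toReal ^ 2) (volume.restrict X)) :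
    Egeo fcor g κ 2 X σ (Measure.dirac z) =
      (((∫ x in X, cost fcor g x z * (σ.rnDeriv volume x).toReal) +
        κ * ∫ x in X, (σ.rnDeriv volume x).toReal ^ 2 : ℝ) : EReal) := by
  rw [Egeo, Tcost_dirac_eq_setIntegral z hX hac hσX, Fen_eq_of_integrable hκ hac hσ,
    EReal.coe_add]

lemma Egeo_densityOn_eq (hκ : 0 ≤ κ) (z : R3) (hX : IsCompact X) {ρ : R3 → ℝ}
    (hρ : Continuous ρ) (hρ₀ : ∀ x ∈ X, 0 ≤ ρ x) (hmass : ∫ x in X, ρ x = 1) :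
    Egeo fcor g κ 2 X (densityOn volume X ρ) (Measure.dirac z) =
      (((∫ x in X, cost fcor g x z * ρ x) + κ * ∫ x in X, ρ x ^ 2 : ℝ) : EReal) := by
  have hXm := hX.measurableSet
  have := isProbabilityMeasure_densityOn hXm (hρ.continuousOn.integrableOn_compact hX) hρ₀ hmass
  have hrn := toReal_rnDeriv_densityOn (ν := volume) hXm hρ.measurable hρ₀
  have hsq : Integrable (fun x => ρ x ^ 2) (volume.restrict X) :=
    (hρ.pow 2).continuousOn.integrableOn_compact hX
  have e₁ : ∫ x in X, cost fcor g x z * ((densityOn volume X ρ).rnDeriv volume x).toReal =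
      ∫ x in X, cost fcor g x z * ρ x := integral_congr_ae (hrn.mono fun x hx => by simp only [hx])
  have e₂ : ∫ x in X, ((densityOn volume X ρ).rnDeriv volume x).toReal ^ 2 = ∫ x in X, ρ x ^ 2 :=
    integral_congr_ae (hrn.mono fun x hx => by simp only [hx])
  rw [Egeo_dirac_eq hκ z hXm densityOn_absolutelyContinuous (densityOn_compl hXm)
      (hsq.congr (hrn.mono fun x hx => by simp only [hx])), e₁, e₂]

end GeostrophicEnergy

lemma memLp_two_restrict_of_continuous {X : Set R3} (hX : IsCompact X) {f : R3 → ℝ}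
    (hf : Continuous f) : MemLp f 2 (volume.restrict X) :=
  (memLp_two_iff_integrable_sq hf.aestronglyMeasurable).mpr
    ((hf.pow 2).continuousOn.integrableOn_compact hX)

section Minimizer

variable {fcor g w : ℝ} {z : R3} {X : Set R3} {σ : Measure R3}

lemma Egeo_dirac_eq_add (hX : IsCompact X) (hρ₀ : ∀ x ∈ X, 0 ≤ w - cost fcor g x z)
    (hmass : ∫ x in X, (w - cost fcor g x z) = 1) [IsProbabilityMeasure σ] (hac : σ ≪ volume)
    (hσX : σ Xᶜ = 0)
    (hσ : Integrable (fun x => (σ.rnDeriv volume x).toReal ^ 2) (volume.restrict X)) :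
    Egeo fcor g (1 / 2) 2 X σ (Measure.dirac z) =
      Egeo fcor g (1 / 2) 2 X (densityOn volume X fun x => w - cost fcor g x z) (Measure.dirac z) +
        ((1 / 2 * ∫ x in X, ((σ.rnDeriv volume x).toReal - (w - cost fcor g x z)) ^ 2 : ℝ) :
          EReal) := by
  have hXm := hX.measurableSet
  have hρ₀c : Continuous fun x => w - cost fcor g x z :=
    continuous_const.sub (continuous_cost_left fcor g z)
  have : IsFiniteMeasure (volume.restrict X) := isFiniteMeasure_restrict.mpr hX.measure_ne_top
  have hσmass : ∫ x in X, (σ.rnDeriv volume x).toReal = 1 := by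
    rw [Measure.setIntegral_toReal_rnDeriv hac, measureReal_def,
      (prob_compl_eq_zero_iff hXm).mp hσX, ENNReal.toReal_one]
  rw [Egeo_dirac_eq (by norm_num) z hXm hac hσX hσ,
    Egeo_densityOn_eq (by norm_num) z hX hρ₀c hρ₀ hmass, ← EReal.coe_add, EReal.coe_eq_coe_iff]
  have hσL2 : MemLp (fun x => (σ.rnDeriv volume x).toReal) 2 (volume.restrict X) :=
    memLp_two_toReal_rnDeriv hσ
  have hρ₀L2 : MemLp (fun x => w - cost fcor g x z) 2 (volume.restrict X) :=
    memLp_two_restrict_of_continuous hX hρ₀c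
  exact integral_mul_add_half_integral_sq_eq hσL2 hρ₀L2 (.of_forall fun x => by ring)
    (hσmass.trans hmass.symm)

lemma Egeo_densityOn_le (hX : IsCompact X) (hρ₀ : ∀ x ∈ X, 0 ≤ w - cost fcor g x z)
    (hmass : ∫ x in X, (w - cost fcor g x z) = 1) [IsProbabilityMeasure σ] (hσX : σ Xᶜ = 0) :
    Egeo fcor g (1 / 2) 2 X (densityOn volume X fun x => w - cost fcor g x z) (Measure.dirac z) ≤
      Egeo fcor g (1 / 2) 2 X σ (Measure.dirac z) := by
  by_cases hσ : σ ≪ volume ∧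
      Integrable (fun x => (σ.rnDeriv volume x).toReal ^ 2) (volume.restrict X)
  · rw [Egeo_dirac_eq_add hX hρ₀ hmass hσ.1 hσX hσ.2]
    exact le_add_of_nonneg_right (EReal.coe_nonneg.mpr (by positivity))
  · rw [Egeo_dirac_eq_top (by norm_num) z hσ]
    exact le_top

lemma eq_densityOn_of_Egeo_le (hX : IsCompact X) (hρ₀ : ∀ x ∈ X, 0 ≤ w - cost fcor g x z)
    (hmass : ∫ x in X, (w - cost fcor g x z) = 1) [IsProbabilityMeasure σ] (hσX : σ Xᶜ = 0)
    (hle : Egeo fcor g (1 / 2) 2 X σ (Measure.dirac z) ≤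
      Egeo fcor g (1 / 2) 2 X (densityOn volume X fun x => w - cost fcor g x z) (Measure.dirac z)) :
    σ = densityOn volume X fun x => w - cost fcor g x z := by
  have hXm := hX.measurableSet
  have hρ₀c : Continuous fun x => w - cost fcor g x z :=
    continuous_const.sub (continuous_cost_left fcor g z)
  have hμ₀ := Egeo_densityOn_eq (fcor := fcor) (g := g) (by norm_num : (0 : ℝ) ≤ 1 / 2) z hX hρ₀c
    hρ₀ hmass
  have hσ : σ ≪ volume ∧
      Integrable (fun x => (σ.rnDeriv volume x).toReal ^ 2) (volume.restrict X) := by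
    by_contra hσ
    rw [Egeo_dirac_eq_top (by norm_num) z hσ, hμ₀, top_le_iff] at hle
    exact EReal.coe_ne_top _ hle
  rw [Egeo_dirac_eq_add hX hρ₀ hmass hσ.1 hσX hσ.2, hμ₀, ← EReal.coe_add, EReal.coe_le_coe_iff]
    at hle
  have : IsFiniteMeasure (volume.restrict X) := isFiniteMeasure_restrict.mpr hX.measure_ne_top
  have hsq : ∫ x in X, ((σ.rnDeriv volume x).toReal - (w - cost fcor g x z)) ^ 2 = 0 :=
    le_antisymm (by linarith) (integral_nonneg fun x => sq_nonneg _)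
  have hdiff : MemLp (fun x => (σ.rnDeriv volume x).toReal - (w - cost fcor g x z)) 2
      (volume.restrict X) :=
    (memLp_two_toReal_rnDeriv hσ.2).sub (memLp_two_restrict_of_continuous hX hρ₀c)
  rw [integral_eq_zero_iff_of_nonneg (fun x => sq_nonneg _) hdiff.integrable_sq] at hsq
  have : IsProbabilityMeasure (densityOn volume X fun x => w - cost fcor g x z) :=
    isProbabilityMeasure_densityOn hXm (hρ₀c.continuousOn.integrableOn_compact hX) hρ₀ hmass
  refine Measure.eq_of_toReal_rnDeriv_ae_eq hσ.1 densityOn_absolutelyContinuous hσX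
    (densityOn_compl hXm) ?_
  filter_upwards [hsq, toReal_rnDeriv_densityOn hXm hρ₀c.measurable hρ₀] with x hx hx₀
  rw [hx₀]
  simpa [sub_eq_zero] using hx

end Minimizer

def euclideanBox {ι : Type*} (I : ι → Set ℝ) : Set (EuclideanSpace ℝ ι) := {x | ∀ i, x i ∈ I i}

lemma isCompact_euclideanBox {ι : Type*} {I : ι → Set ℝ} (hI : ∀ i, IsCompact (I i)) :
    IsCompact (euclideanBox I) := by
  have : euclideanBox I = WithLp.toLp 2 '' univ.pi I := by
    ext x
    refine ⟨fun hx => ⟨WithLp.ofLp x, fun i _ => hx i, rfl⟩, ?_⟩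
    rintro ⟨y, hy, rfl⟩ i
    exact hy i trivial
  rw [this]
  exact (isCompact_univ_pi hI).image (PiLp.continuous_toLp 2 _)

lemma setIntegral_euclideanBox_prod {ι : Type*} [Fintype ι] (I : ι → Set ℝ) (f : ι → ℝ → ℝ) :
    ∫ x in euclideanBox I, ∏ i, f i (x i) = ∏ i, ∫ t in I i, f i t := by
  let e := (MeasurableEquiv.toLp 2 (ι → ℝ)).symm
  have hbox : euclideanBox I = e ⁻¹' univ.pi I := by
    ext x; simp [euclideanBox, e, MeasurableEquiv.coe_toLp_symm]
  rw [hbox]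
  refine ((EuclideanSpace.volume_preserving_symm_measurableEquiv_toLp ι).setIntegral_preimage_emb
      e.measurableEmbedding (fun y => ∏ i, f i (y i)) _).trans ?_
  rw [volume_pi, Measure.restrict_pi_pi]
  exact integral_fintype_prod_eq_prod _

lemma setIntegral_euclideanBox_mul_mul (I : Fin 3 → Set ℝ) (f₀ f₁ f₂ : ℝ → ℝ) :
    ∫ x in euclideanBox I, f₀ (x 0) * f₁ (x 1) * f₂ (x 2) =
      (∫ t in I 0, f₀ t) * (∫ t in I 1, f₁ t) * ∫ t in I 2, f₂ t := by
  simpa [Fin.prod_univ_three] using setIntegral_euclideanBox_prod I ![f₀, f₁, f₂]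

lemma setIntegral_Icc_one {l u : ℝ} (h : l ≤ u) : ∫ _ in Icc l u, (1 : ℝ) = u - l := by
  simp [h]

lemma setIntegral_Icc_neg_id (a : ℝ) : ∫ t in Icc (-a) a, t = 0 := by
  rcases le_or_gt (-a) a with ha | ha
  · rw [integral_Icc_eq_integral_Ioc, ← intervalIntegral.integral_of_le ha, integral_id]
    ring
  · simp [Icc_eq_empty_of_lt ha]

lemma setIntegral_Icc_sub_sq_mul_id {a : ℝ} (ha : 0 ≤ a) (s : ℝ) :
    ∫ t in Icc (-a) a, (t - s) ^ 2 * t = -(4 / 3) * a ^ 3 * s := by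
  rw [integral_Icc_eq_integral_Ioc, ← intervalIntegral.integral_of_le (by linarith)]
  have hI : ∀ f : ℝ → ℝ, Continuous f → IntervalIntegrable f volume (-a) a :=
    fun f hf => hf.intervalIntegrable _ _
  calc ∫ t in -a..a, (t - s) ^ 2 * t = ∫ t in -a..a, (t ^ 3 - 2 * s * t ^ 2 + s ^ 2 * t) := by
        congr 1; ext t; ring
    _ = -(4 / 3) * a ^ 3 * s := by
        rw [intervalIntegral.integral_add (hI _ (by fun_prop)) (hI _ (by fun_prop)),
          intervalIntegral.integral_sub (hI _ (by fun_prop)) (hI _ (by fun_prop)),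
          intervalIntegral.integral_const_mul, intervalIntegral.integral_const_mul,
          integral_pow, integral_pow, integral_id]
        ring

def geoBox (a b h : ℝ) : Set R3 := euclideanBox ![Icc (-a) a, Icc (-b) b, Icc 0 h]

lemma setOf_mem_Icc_eq_geoBox (a b h : ℝ) :
    {x : R3 | x 0 ∈ Icc (-a) a ∧ x 1 ∈ Icc (-b) b ∧ x 2 ∈ Icc (0 : ℝ) h} = geoBox a b h := by
  ext x
  simp [geoBox, euclideanBox, Fin.forall_fin_succ]

lemma isCompact_geoBox (a b h : ℝ) : IsCompact (geoBox a b h) :=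
  isCompact_euclideanBox fun i => by fin_cases i <;> exact isCompact_Icc

lemma setIntegral_geoBox_mul_mul (a b h : ℝ) (f₀ f₁ f₂ : ℝ → ℝ) :
    ∫ x in geoBox a b h, f₀ (x 0) * f₁ (x 1) * f₂ (x 2) =
      (∫ t in Icc (-a) a, f₀ t) * (∫ t in Icc (-b) b, f₁ t) * ∫ t in Icc 0 h, f₂ t :=
  setIntegral_euclideanBox_mul_mul _ f₀ f₁ f₂

lemma volume_real_geoBox {a b h : ℝ} (ha : 0 ≤ a) (hb : 0 ≤ b) (hh : 0 ≤ h) :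
    volume.real (geoBox a b h) = 4 * a * b * h := by
  have := setIntegral_geoBox_mul_mul a b h (fun _ => 1) (fun _ => 1) (fun _ => 1)
  simp only [mul_one, setIntegral_Icc_one (neg_le_self ha), setIntegral_Icc_one (neg_le_self hb),
    setIntegral_Icc_one hh, integral_const, smul_eq_mul, measureReal_restrict_apply_univ] at this
  linarith

lemma integral_euclideanSpace_apply {α ι : Type*} [MeasurableSpace α] [Fintype ι]
    {μ : Measure α} {F : α → EuclideanSpace ℝ ι} (hF : Integrable F μ) (i : ι) :
    (∫ x, F x ∂μ) i = ∫ x, F x i ∂μ :=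
  ((EuclideanSpace.proj i).integral_comp_comm hF).symm

lemma setIntegral_geoBox_weight_smul_zero (fcor g w : ℝ) (z : R3) {a b h : ℝ}
    (ha : 0 ≤ a) (hb : 0 ≤ b) (hh : 0 ≤ h) :
    (∫ x in geoBox a b h, (w - cost fcor g x z) • x) 0 =
      fcor ^ 2 * (4 * a ^ 3 * b * h / 3) * z 0 / z 2 := by
  have hI : ∀ {E : Type} [NormedAddCommGroup E] (f : R3 → E), Continuous f →
      Integrable f (volume.restrict (geoBox a b h)) :=
    fun f hf => hf.continuousOn.integrableOn_compact (isCompact_geoBox a b h)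
  rw [integral_euclideanSpace_apply (hI _ (by fun_prop))]
  simp only [PiLp.smul_apply, smul_eq_mul]
  have h₁ := setIntegral_geoBox_mul_mul a b h (fun t => t) (fun _ => 1) (fun _ => 1)
  have h₂ := setIntegral_geoBox_mul_mul a b h (fun t => (t - z 0) ^ 2 * t) (fun _ => 1) (fun _ => 1)
  have h₃ := setIntegral_geoBox_mul_mul a b h (fun t => t) (fun t => (t - z 1) ^ 2) (fun _ => 1)
  have h₄ := setIntegral_geoBox_mul_mul a b h (fun t => t) (fun _ => 1) (fun t => t)
  simp only [mul_one, setIntegral_Icc_neg_id, setIntegral_Icc_sub_sq_mul_id ha, zero_mul,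
    setIntegral_Icc_one (neg_le_self hb), setIntegral_Icc_one hh] at h₁ h₂ h₃ h₄
  calc ∫ x in geoBox a b h, (w - cost fcor g x z) * x 0
      = ∫ x in geoBox a b h, (w * x 0 - fcor ^ 2 / 2 / z 2 * ((x 0 - z 0) ^ 2 * x 0)
          - fcor ^ 2 / 2 / z 2 * (x 0 * (x 1 - z 1) ^ 2) - g / z 2 * (x 0 * x 2)) := by
        congr 1; ext x; simp only [cost]; ring
    _ = fcor ^ 2 * (4 * a ^ 3 * b * h / 3) * z 0 / z 2 := by
        rw [integral_sub (hI _ (by fun_prop)) (hI _ (by fun_prop)),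
          integral_sub (hI _ (by fun_prop)) (hI _ (by fun_prop)),
          integral_sub (hI _ (by fun_prop)) (hI _ (by fun_prop)),
          integral_const_mul, integral_const_mul, integral_const_mul, integral_const_mul,
          h₁, h₂, h₃, h₄]
        ring

lemma setIntegral_geoBox_weight_smul_one (fcor g w : ℝ) (z : R3) {a b h : ℝ}
    (ha : 0 ≤ a) (hb : 0 ≤ b) (hh : 0 ≤ h) :
    (∫ x in geoBox a b h, (w - cost fcor g x z) • x) 1 =
      fcor ^ 2 * (4 * a * b ^ 3 * h / 3) * z 1 / z 2 := by
  have hI : ∀ {E : Type} [NormedAddCommGroup E] (f : R3 → E), Continuous f →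
      Integrable f (volume.restrict (geoBox a b h)) :=
    fun f hf => hf.continuousOn.integrableOn_compact (isCompact_geoBox a b h)
  rw [integral_euclideanSpace_apply (hI _ (by fun_prop))]
  simp only [PiLp.smul_apply, smul_eq_mul]
  have h₁ := setIntegral_geoBox_mul_mul a b h (fun _ => 1) (fun t => t) (fun _ => 1)
  have h₂ := setIntegral_geoBox_mul_mul a b h (fun t => (t - z 0) ^ 2) (fun t => t) (fun _ => 1)
  have h₃ := setIntegral_geoBox_mul_mul a b h (fun _ => 1) (fun t => (t - z 1) ^ 2 * t) (fun _ => 1)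
  have h₄ := setIntegral_geoBox_mul_mul a b h (fun _ => 1) (fun t => t) (fun t => t)
  simp only [mul_one, one_mul, setIntegral_Icc_neg_id, setIntegral_Icc_sub_sq_mul_id hb, mul_zero,
    zero_mul, setIntegral_Icc_one (neg_le_self ha), setIntegral_Icc_one hh] at h₁ h₂ h₃ h₄
  calc ∫ x in geoBox a b h, (w - cost fcor g x z) * x 1
      = ∫ x in geoBox a b h, (w * x 1 - fcor ^ 2 / 2 / z 2 * ((x 0 - z 0) ^ 2 * x 1)
          - fcor ^ 2 / 2 / z 2 * ((x 1 - z 1) ^ 2 * x 1) - g / z 2 * (x 1 * x 2)) := by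
        congr 1; ext x; simp only [cost]; ring
    _ = fcor ^ 2 * (4 * a * b ^ 3 * h / 3) * z 1 / z 2 := by
        rw [integral_sub (hI _ (by fun_prop)) (hI _ (by fun_prop)),
          integral_sub (hI _ (by fun_prop)) (hI _ (by fun_prop)),
          integral_sub (hI _ (by fun_prop)) (hI _ (by fun_prop)),
          integral_const_mul, integral_const_mul, integral_const_mul, integral_const_mul,
          h₁, h₂, h₃, h₄]
        ring

lemma setIntegral_sub_eq_one {α : Type*} [MeasurableSpace α] {ν : Measure α} {X : Set α}
    {c : α → ℝ} (hc : IntegrableOn c X ν) (hX : ν X ≠ ⊤) (hV : ν.real X ≠ 0) :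
    ∫ x in X, ((ν.real X)⁻¹ * (1 + ∫ y in X, c y ∂ν) - c x) ∂ν = 1 := by
  have : IsFiniteMeasure (ν.restrict X) := isFiniteMeasure_restrict.mpr hX
  rw [integral_sub (integrable_const _) hc, setIntegral_const, smul_eq_mul]
  field_simp
  ring

theorem stmt18_general (fcor g : ℝ)
    (a b h : ℝ) (ha : 0 < a) (hb : 0 < b) (hh : 0 < h)
    (Xbox : Set R3)
    (hXbox : Xbox = {x : R3 | x 0 ∈ Set.Icc (-a) a ∧ x 1 ∈ Set.Icc (-b) b ∧
      x 2 ∈ Set.Icc (0:ℝ) h})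
    (z : R3)
    (hsmall : ∀ x ∈ Xbox,
      cost fcor g x z - (4*a*b*h)⁻¹ * ∫ x' in Xbox, cost fcor g x' z < (4*a*b*h)⁻¹)
    (w : ℝ) (hw : w = (4*a*b*h)⁻¹ * (1 + ∫ x in Xbox, cost fcor g x z))
    (A B : ℝ) (hA : A = 1 - (4*a*b*h) * fcor ^ 2 * b ^ 2 / (3 * z 2))
    (hB : B = 1 - (4*a*b*h) * fcor ^ 2 * a ^ 2 / (3 * z 2)) :
    ((∀ w' : ℝ, w' - (∫ x in Xbox, fstar (1/2) 2 (w' - cost fcor g x z))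
        ≤ w - ∫ x in Xbox, fstar (1/2) 2 (w - cost fcor g x z)) ∧
      (∀ w' : ℝ, (∀ w'' : ℝ, w'' - (∫ x in Xbox, fstar (1/2) 2 (w'' - cost fcor g x z))
        ≤ w' - ∫ x in Xbox, fstar (1/2) 2 (w' - cost fcor g x z)) → w' = w)) ∧
    (∃ μ : Measure R3,
      μ = (volume.restrict Xbox).withDensity (fun x => ENNReal.ofReal (w - cost fcor g x z)) ∧
      IsProbabilityMeasure μ ∧
      (∀ σ' : Measure R3, IsProbabilityMeasure σ' → σ' Xboxᶜ = 0 →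
        Egeo fcor g (1/2) 2 Xbox μ (Measure.dirac z)
          ≤ Egeo fcor g (1/2) 2 Xbox σ' (Measure.dirac z)) ∧
      (∀ σ' : Measure R3, IsProbabilityMeasure σ' → σ' Xboxᶜ = 0 →
        (∀ σ'' : Measure R3, IsProbabilityMeasure σ'' → σ'' Xboxᶜ = 0 →
          Egeo fcor g (1/2) 2 Xbox σ' (Measure.dirac z)
            ≤ Egeo fcor g (1/2) 2 Xbox σ'' (Measure.dirac z)) → σ' = μ)) ∧
    ((∫ x in Xbox, (w - cost fcor g x z) • x) 0 = (1 - B) * z 0 ∧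
     (∫ x in Xbox, (w - cost fcor g x z) • x) 1 = (1 - A) * z 1) := by
  rw [setOf_mem_Icc_eq_geoBox] at hXbox
  subst hXbox
  have hX := isCompact_geoBox a b h
  have hvol := volume_real_geoBox ha.le hb.le hh.le
  have hV : volume.real (geoBox a b h) ≠ 0 := by rw [hvol]; positivity
  have hcont := continuous_cost_left fcor g z
  rw [← hvol] at hw hsmall
  have hmass : ∫ x in geoBox a b h, (w - cost fcor g x z) = 1 := hw ▸
    setIntegral_sub_eq_one (hcont.continuousOn.integrableOn_compact hX) hX.measure_ne_top hV
  have hpos : ∀ x ∈ geoBox a b h, 0 < w - cost fcor g x z := fun x hx => by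
    rw [hw]; linarith [hsmall x hx]
  have hρ₀ : ∀ x ∈ geoBox a b h, 0 ≤ w - cost fcor g x z := fun x hx => (hpos x hx).le
  have hprob :
      IsProbabilityMeasure (densityOn volume (geoBox a b h) fun x => w - cost fcor g x z) :=
    isProbabilityMeasure_densityOn hX.measurableSet
      ((continuous_const.sub hcont).continuousOn.integrableOn_compact hX) hρ₀ hmass
  have : IsFiniteMeasure (volume.restrict (geoBox a b h)) :=
    isFiniteMeasure_restrict.mpr hX.measure_ne_top
  refine ⟨sub_integral_fstar_isGreatest_unique (memLp_two_restrict_of_continuous hX hcont)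
      (fun h0 => hV ?_) ((ae_restrict_iff' hX.measurableSet).mpr (.of_forall hpos)) hmass,
    ⟨_, rfl, hprob, fun σ _ hσX => Egeo_densityOn_le hX hρ₀ hmass hσX,
      fun σ _ hσX hmin => eq_densityOn_of_Egeo_le hX hρ₀ hmass hσX
        (hmin _ hprob (densityOn_compl hX.measurableSet))⟩, ?_, ?_⟩
  · simp [measureReal_def, Measure.restrict_eq_zero.mp h0]
  · rw [setIntegral_geoBox_weight_smul_zero fcor g w z ha.le hb.le hh.le, hB]
    ring
  · rw [setIntegral_geoBox_weight_smul_one fcor g w z ha.le hb.le hh.le, hA]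
    ring

theorem stmt18 (fcor g δ : ℝ) (hf : 0 < fcor) (hg : 0 < g) (hδ : δ ∈ Set.Ioo (0:ℝ) 1)
    (a b h : ℝ) (ha : 0 < a) (hb : 0 < b) (hh : 0 < h)
    (Xbox : Set R3)
    (hXbox : Xbox = {x : R3 | x 0 ∈ Set.Icc (-a) a ∧ x 1 ∈ Set.Icc (-b) b ∧
      x 2 ∈ Set.Icc (0:ℝ) h})
    (z : R3) (hz : z ∈ Ydom δ)
    (hsmall : ∀ x ∈ Xbox,
      cost fcor g x z - (4*a*b*h)⁻¹ * ∫ x' in Xbox, cost fcor g x' z < (4*a*b*h)⁻¹)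
    (w : ℝ) (hw : w = (4*a*b*h)⁻¹ * (1 + ∫ x in Xbox, cost fcor g x z))
    (A B : ℝ) (hA : A = 1 - (4*a*b*h) * fcor ^ 2 * b ^ 2 / (3 * z 2))
    (hB : B = 1 - (4*a*b*h) * fcor ^ 2 * a ^ 2 / (3 * z 2)) :
    ((∀ w' : ℝ, w' - (∫ x in Xbox, fstar (1/2) 2 (w' - cost fcor g x z))
        ≤ w - ∫ x in Xbox, fstar (1/2) 2 (w - cost fcor g x z)) ∧
      (∀ w' : ℝ, (∀ w'' : ℝ, w'' - (∫ x in Xbox, fstar (1/2) 2 (w'' - cost fcor g x z))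
        ≤ w' - ∫ x in Xbox, fstar (1/2) 2 (w' - cost fcor g x z)) → w' = w)) ∧
    (∃ μ : Measure R3,
      μ = (volume.restrict Xbox).withDensity (fun x => ENNReal.ofReal (w - cost fcor g x z)) ∧
      IsProbabilityMeasure μ ∧
      (∀ σ' : Measure R3, IsProbabilityMeasure σ' → σ' Xboxᶜ = 0 →
        Egeo fcor g (1/2) 2 Xbox μ (Measure.dirac z)
          ≤ Egeo fcor g (1/2) 2 Xbox σ' (Measure.dirac z)) ∧
      (∀ σ' : Measure R3, IsProbabilityMeasure σ' → σ' Xboxᶜ = 0 →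
        (∀ σ'' : Measure R3, IsProbabilityMeasure σ'' → σ'' Xboxᶜ = 0 →
          Egeo fcor g (1/2) 2 Xbox σ' (Measure.dirac z)
            ≤ Egeo fcor g (1/2) 2 Xbox σ'' (Measure.dirac z)) → σ' = μ)) ∧
    ((∫ x in Xbox, (w - cost fcor g x z) • x) 0 = (1 - B) * z 0 ∧
     (∫ x in Xbox, (w - cost fcor g x z) • x) 1 = (1 - A) * z 1) :=
  stmt18_general fcor g a b h ha hb hh Xbox hXbox z hsmall w hw A B hA hB
end
end

section
/- Define ŷ : Y^N → (ℝ³)^N by ŷ^i(z) = (1/(2 z₃^i)) (z₁^i, z₂^i, −1), and ψ̂ : ℝ^N × Y^N → ℝ^N by ψ̂^i(w,z) = w^i + (z₁^i/(2 z₃^i))² + (z₂^i/(2 z₃^i))² + (1/(2 z₃^i))² − (f_cor²/(2 z₃^i))((z₁^i)² + (z₂^i)²). Then for every i ∈ {1,…,N} and every (w,z) ∈ ℝ^N × D^N, the image of the c-Laguerre cell under Φ⁻¹ is a classical Laguerre cell: Φ⁻¹(L^i_c(w,z)) = {x ∈ Φ⁻¹(X) : ‖x − ŷ^i(z)‖²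 − ψ̂^i(w,z) ≤ ‖x − ŷ^j(z)‖² − ψ̂^j(w,z) for all j ∈ {1,…,N}}. -/
open MeasureTheory Set Real Filter
open scoped ENNReal NNReal

noncomputable section

/-- seeds of the classical Laguerre tessellation -/
def yhat (zi : R3) : R3 := (2 * zi 2)⁻¹ • (WithLp.toLp 2 ![zi 0, zi 1, -1] : R3)

/-- weights of the classical Laguerre tessellation -/
def psihat (fcor : ℝ) (wi : ℝ) (zi : R3) : ℝ :=
  wi + (zi 0 / (2 * zi 2)) ^ 2 + (zi 1 / (2 * zi 2)) ^ 2 + (1 / (2 * zi 2)) ^ 2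
    - fcor ^ 2 / (2 * zi 2) * ((zi 0) ^ 2 + (zi 1) ^ 2)

/-! Substituting `Φ x` for the fluid point turns `c(Φ x, z) - w` into the power distance
`‖x - ŷ(z)‖² - ψ̂(w, z)` minus `‖x‖²`; since `‖x‖²` does not depend on the seed, the inequalities
defining the two kinds of Laguerre cells coincide. -/

lemma cost_Phi_sub_eq {fcor g : ℝ} (hf : fcor ≠ 0) (hg : g ≠ 0) {y : R3} (hy : y 2 ≠ 0)
    (w : ℝ) (x : R3) :
    cost fcor g (Phi fcor g x) y - w = ‖x - yhat y‖ ^ 2 - psihat fcor w y - ‖x‖ ^ 2 := by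
  simp only [EuclideanSpace.norm_sq_eq, Fin.sum_univ_three, Real.norm_eq_abs, sq_abs,
    PiLp.sub_apply, cost, Phi, yhat, psihat, PiLp.smul_apply, smul_eq_mul,
    Matrix.cons_val_zero, Matrix.cons_val_one, Matrix.cons_val_two, Matrix.head_cons,
    Matrix.tail_cons]
  field_simp
  ring

theorem stmt19_general (fcor g δ : ℝ) (hf : 0 < fcor) (hg : 0 < g) (hδ : δ ∈ Set.Ioo (0:ℝ) 1)
    (X : Set R3)
    (N : ℕ) (w : Fin N → ℝ) (z : Fin N → R3) (hz : z ∈ DN δ N) (i : Fin N) :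
    Phi fcor g ⁻¹' (LagCell fcor g X N w z i)
      = {x ∈ Phi fcor g ⁻¹' X | ∀ j : Fin N,
          ‖x - yhat (z i)‖ ^ 2 - psihat fcor (w i) (z i)
            ≤ ‖x - yhat (z j)‖ ^ 2 - psihat fcor (w j) (z j)} := by
  have hz2 (j : Fin N) : z j 2 ≠ 0 := (hδ.1.trans (hz.1 j).1).ne'
  ext x
  simp only [mem_preimage, LagCell, mem_ofPred_eq,
    cost_Phi_sub_eq hf.ne' hg.ne' (hz2 _), sub_le_sub_iff_right]

theorem stmt19 (fcor g δ : ℝ) (hf : 0 < fcor) (hg : 0 < g) (hδ : δ ∈ Set.Ioo (0:ℝ) 1)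
    (X : Set R3) (hXne : X.Nonempty) (hXconn : IsConnected X) (hXcpt : IsCompact X)
    (hXcl : X = closure (interior X))
    (N : ℕ) (w : Fin N → ℝ) (z : Fin N → R3) (hz : z ∈ DN δ N) (i : Fin N) :
    Phi fcor g ⁻¹' (LagCell fcor g X N w z i)
      = {x ∈ Phi fcor g ⁻¹' X | ∀ j : Fin N,
          ‖x - yhat (z i)‖ ^ 2 - psihat fcor (w i) (z i)
            ≤ ‖x - yhat (z j)‖ ^ 2 - psihat fcor (w j) (z j)} :=
  stmt19_general fcor g δ hf hg hδ X N w z hz i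
end
end
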